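/- arXiv:0911.1638 — 3 statements merged into one kernel-verified Lean document; each statement's English description precedes it below -/
import Mathlib

section
/- Let G be a finitely generated linear group over a field. If G is nontrivial, then there exists a surjective homomorphism from G onto a nontrivial finite group. -/
/-!
The entries of the generators of `G` and of their inverses generate a subring `A` of `k` of
finite type over `ℤ`, and `G` lies in `GL n A`. Since `ℤ` is a Jacobson ring, so is `A`, and `A`
is reduced; hence for `g ≠ 1` some nonzero entry of `g - 1` avoids a maximal ideal `m`. By
Zariski's lemma the field `A ⧸ m` is finite over `ℤ`, hence finite, and the image of `G` in the
finite group `GL n (A ⧸ m)` is a nontrivial finite quotient.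
-/

universe u

instance Int.isJacobsonRing : IsJacobsonRing ℤ := by
  rw [isJacobsonRing_iff_prime_eq]
  intro P hP
  by_cases hbot : P = ⊥
  · subst hbot
    refine le_antisymm (fun a ha => ?_) Ideal.le_jacobson
    -- in the Jacobson radical, `a * a + 1` is a unit, i.e. `±1`
    have hunit : IsUnit (a * a + 1) := Ideal.mem_jacobson_bot.mp ha a
    rcases Int.isUnit_iff.mp hunit with h | h
    · simpa using h
    · nlinarith
  · have : P.IsMaximal := IsPrime.to_maximal_ideal hbot
    exact Ideal.jacobson_eq_self_of_isMaximal

theorem finite_of_moduleFinite_int (F : Type*) [Field F] [Module.Finite ℤ F] : Finite F := by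
  obtain ⟨p, hp⟩ := CharP.exists F
  rcases CharP.char_is_prime_or_zero F p with h | rfl
  · have : Fact p.Prime := ⟨h⟩
    let : Algebra (ZMod p) F := ZMod.algebra _ _
    have : Module.Finite (ZMod p) F := Module.Finite.of_restrictScalars_finite ℤ (ZMod p) F
    exact Module.finite_of_finite (ZMod p)
  · have : CharZero F := CharP.charP_to_charZero F
    exact absurd (isField_of_isIntegral_of_isField (algebraMap ℤ F).injective_int
      (Field.toIsField F)) Int.not_isField

theorem finite_of_finiteType_int (F : Type*) [Field F] [Algebra ℤ F] [Algebra.FiniteType ℤ F] :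
    Finite F := by
  obtain rfl : ‹Algebra ℤ F› = Ring.toIntAlgebra F := Subsingleton.elim _ _
  have := finite_of_finite_type_of_isJacobsonRing ℤ F
  exact finite_of_moduleFinite_int F

theorem Ideal.exists_isMaximal_notMem_of_ne_zero {R : Type*} [CommRing R] [IsJacobsonRing R]
    [IsReduced R] {a : R} (ha : a ≠ 0) : ∃ m : Ideal R, m.IsMaximal ∧ a ∉ m := by
  have hjac : (⊥ : Ideal R).jacobson = ⊥ := by
    rw [← Ideal.radical_eq_jacobson, Ideal.radical_bot_of_isReduced]
  have : a ∉ (⊥ : Ideal R).jacobson := by simpa [hjac] using ha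
  simp only [Ideal.jacobson, Ideal.mem_sInf, not_forall] at this
  obtain ⟨m, ⟨-, hm⟩, ham⟩ := this
  exact ⟨m, hm, ham⟩

theorem Units.mem_range_map_of_injective {M N : Type*} [Monoid M] [Monoid N] {f : M →* N}
    (hf : Function.Injective f) {u : Nˣ} (hu : (u : N) ∈ Set.range f)
    (hu' : ((u⁻¹ : Nˣ) : N) ∈ Set.range f) : u ∈ (Units.map f).range := by
  obtain ⟨a, ha⟩ := hu
  obtain ⟨b, hb⟩ := hu'
  have hab : a * b = 1 := hf (by simp [ha, hb])
  have hba : b * a = 1 := hf (by simp [ha, hb])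
  exact ⟨⟨a, b, hab, hba⟩, Units.ext ha⟩

namespace Matrix.GeneralLinearGroup

variable {n : Type*} [Fintype n] [DecidableEq n]

theorem map_injective {R S : Type*} [CommRing R] [CommRing S] {f : R →+* S}
    (hf : Function.Injective f) : Function.Injective (map (n := n) f) :=
  fun _ _ h => Units.ext <| Matrix.map_injective hf <| congrArg Units.val h

theorem mem_range_map_subtype {R : Type*} [CommRing R] {A : Type*} [SetLike A R]
    [SubringClass A R] (B : A) {g : GL n R} (hg : ∀ i j, (g : Matrix n n R) i j ∈ B)
    (hg' : ∀ i j, ((g⁻¹ : GL n R) : Matrix n n R) i j ∈ B) :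
    g ∈ (map (SubringClass.subtype B)).range := by
  refine Units.mem_range_map_of_injective (Matrix.map_injective Subtype.val_injective) ?_ ?_
  · exact ⟨Matrix.of fun i j => ⟨_, hg i j⟩, rfl⟩
  · exact ⟨Matrix.of fun i j => ⟨_, hg' i j⟩, rfl⟩

theorem exists_isMaximal_map_ne_one {R : Type*} [CommRing R] [IsJacobsonRing R] [IsReduced R]
    {g : GL n R} (hg : g ≠ 1) :
    ∃ m : Ideal R, m.IsMaximal ∧ map (Ideal.Quotient.mk m) g ≠ 1 := by
  obtain ⟨i, j, hij⟩ : ∃ i j, (g : Matrix n n R) i j ≠ (1 : Matrix n n R) i j := by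
    by_contra! h
    exact hg (Units.ext (Matrix.ext h))
  obtain ⟨m, hm, hnotMem⟩ := Ideal.exists_isMaximal_notMem_of_ne_zero (sub_ne_zero.mpr hij)
  refine ⟨m, hm, fun h => hnotMem ?_⟩
  have hentry := congrArg (fun M : GL n (R ⧸ m) => M i j) h
  rw [← Ideal.Quotient.eq]
  simpa [Matrix.one_apply, apply_ite (Ideal.Quotient.mk m)] using hentry

theorem exists_finite_field_map_ne_one {A : Type u} [CommRing A] [IsReduced A]
    [Algebra.FiniteType ℤ A] {g : GL n A} (hg : g ≠ 1) :
    ∃ (F : Type u) (_ : Field F) (_ : Finite F) (φ : A →+* F), map φ g ≠ 1 := by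
  have : IsJacobsonRing A := isJacobsonRing_of_finiteType (A := ℤ)
  obtain ⟨m, hm, hgm⟩ := exists_isMaximal_map_ne_one hg
  let := Ideal.Quotient.field m
  have : Algebra.FiniteType ℤ (A ⧸ m) :=
    .of_surjective (Ideal.Quotient.mkₐ ℤ m) (Ideal.Quotient.mkₐ_surjective ℤ m)
  exact ⟨A ⧸ m, _, finite_of_finiteType_int _, _, hgm⟩

theorem exists_finiteType_closure_le_range_map {k : Type*} [CommRing k] (S : Finset (GL n k)) :
    ∃ A : Subalgebra ℤ k, Algebra.FiniteType ℤ A ∧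
      Subgroup.closure (S : Set (GL n k)) ≤ (map (SubringClass.subtype A)).range := by
  let entries : Set k := Set.range (fun x : S × n × n => (x.1 : GL n k) x.2.1 x.2.2) ∪
    Set.range (fun x : S × n × n => ((x.1 : GL n k)⁻¹ : GL n k) x.2.1 x.2.2)
  refine ⟨Algebra.adjoin ℤ entries,
    .adjoin_of_finite ((Set.finite_range _).union (Set.finite_range _)),
    (Subgroup.closure_le _).mpr fun s hs => ?_⟩
  exact mem_range_map_subtype _
    (fun i j => Algebra.subset_adjoin (.inl ⟨(⟨s, hs⟩, i, j), rfl⟩))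
    (fun i j => Algebra.subset_adjoin (.inr ⟨(⟨s, hs⟩, i, j), rfl⟩))

end Matrix.GeneralLinearGroup

theorem MonoidHom.exists_surjective_nontrivial_of_apply_ne_one {G K : Type} [Group G] [Group K]
    [Finite K] (φ : G →* K) {g : G} (hg : φ g ≠ 1) :
    ∃ (H : Type) (_ : Group H) (_ : Finite H) (f : G →* H),
      Function.Surjective f ∧ Nontrivial H :=
  ⟨φ.range, _, inferInstance, φ.rangeRestrict, φ.rangeRestrict_surjective,
    ⟨φ.rangeRestrict g, 1, fun h => hg (congrArg Subtype.val h)⟩⟩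

open Matrix.GeneralLinearGroup in
/-- A nontrivial finitely generated linear group (subgroup of `GL(n, k)` for a field `k`)
admits a surjective homomorphism onto a nontrivial finite group. -/
theorem fg_linear_group_has_nontrivial_finite_quotient (k : Type) [Field k] (n : ℕ)
    (G : Subgroup (Matrix.GeneralLinearGroup (Fin n) k)) (hG : G.FG) (hnt : G ≠ ⊥) :
    ∃ (H : Type) (_ : Group H) (_ : Finite H) (f : G →* H),
      Function.Surjective f ∧ Nontrivial H := by
  obtain ⟨S, rfl⟩ := hG
  obtain ⟨A, hA, hle⟩ := exists_finiteType_closure_le_range_map S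
  have hinj := map_injective (n := Fin n) (f := SubringClass.subtype A) (fun _ _ => Subtype.ext)
  let lift : Subgroup.closure (S : Set (GL (Fin n) k)) →* GL (Fin n) A :=
    (MonoidHom.ofInjective hinj).symm.toMonoidHom.comp (Subgroup.inclusion hle)
  obtain ⟨g, hg⟩ := Subgroup.ne_bot_iff_exists_ne_one.mp hnt
  have hmap : map (SubringClass.subtype A) (lift g) = g :=
    MonoidHom.apply_ofInjective_symm hinj (Subgroup.inclusion hle g)
  have hlift : lift g ≠ 1 := fun h => hg <| Subtype.ext <| by
    rw [← hmap, h, map_one, Subgroup.coe_one]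
  obtain ⟨F, _, _, φ, hφ⟩ := exists_finite_field_map_ne_one hlift
  exact ((map φ).comp lift).exists_surjective_nontrivial_of_apply_ne_one hφ
end

section
/- Let V be a finite-dimensional vector space over an algebraically closed field k of characteristic p > 0, and let φ : V → V be an additive map that is p-semilinear (φ(a·v) = a^p · φ(v)). Then V decomposes as a direct sum V = V_ss ⊕ V_nilp of φ-stable subspaces, where φ is bijective on V_ss and nilpotent on V_nilp. -/
/-!
The iterated kernels `ker φⁿ` increase and the iterated images `im φⁿ` decrease, and all of them
are `k`-subspaces: kernels because `φⁿ (a • v) = a ^ pⁿ • φⁿ v`, images because moreover every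
element of `k` is a `pⁿ`-th power. By finite dimensionality both chains stabilize, say from some
`n ≥ 1` on. Fitting's argument only needs this stabilization, so it runs for `φ` viewed as a
`ℤ`-linear endomorphism: `V = ker φⁿ ⊕ im φⁿ`, with `φ` nilpotent on the first summand and
bijective on the second.
-/

namespace Submodule

open Filter

variable {R S M : Type*} [Semiring R] [Semiring S] [AddCommMonoid M] [Module R M] [Module S M]
  [SMul R S] [IsScalarTower R S M]

theorem exists_restrictScalars_eq_of_smul_mem (N : Submodule R M)
    (hN : ∀ (a : S), ∀ v ∈ N, a • v ∈ N) : ∃ K : Submodule S M, K.restrictScalars R = N :=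
  ⟨{ N.toAddSubmonoid with smul_mem' := hN }, rfl⟩

theorem monotone_stabilizes_of_restrictScalars [IsNoetherian S M] {N : ℕ → Submodule R M}
    (hN_mono : Monotone N) (hN : ∀ n, ∃ K : Submodule S M, K.restrictScalars R = N n) :
    ∀ᶠ n in atTop, ∀ m, n ≤ m → N m = N n := by
  choose K hK using hN
  have hK_mono : Monotone K := fun i j hij => by
    rw [← restrictScalars_le (S := R), hK, hK]
    exact hN_mono hij
  obtain ⟨n, hn⟩ := monotone_stabilizes_iff_noetherian.mpr ‹_› ⟨K, hK_mono⟩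
  refine eventually_atTop.mpr ⟨n, fun i hi m hm => ?_⟩
  rw [← hK, ← hK]
  exact congrArg _ ((hn m (hi.trans hm)).symm.trans (hn i hi))

theorem antitone_stabilizes_of_restrictScalars [IsArtinian S M] {N : ℕ → Submodule R M}
    (hN_anti : Antitone N) (hN : ∀ n, ∃ K : Submodule S M, K.restrictScalars R = N n) :
    ∀ᶠ n in atTop, ∀ m, n ≤ m → N m = N n := by
  choose K hK using hN
  have hK_anti : Antitone K := fun i j hij => by
    rw [← restrictScalars_le (S := R), hK, hK]
    exact hN_anti hij
  obtain ⟨n, hn⟩ := IsArtinian.monotone_stabilizes ⟨_, hK_anti.dual_right⟩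
  refine eventually_atTop.mpr ⟨n, fun i hi m hm => ?_⟩
  rw [← hK, ← hK]
  exact congrArg _ ((hn m (hi.trans hm)).symm.trans (hn i hi))

end Submodule

namespace Module.End

open LinearMap

variable {R M : Type*} [Ring R] [AddCommGroup M] [Module R M] (f : End R M) (n : ℕ)

theorem mapsTo_ker_pow : Set.MapsTo f (ker (f ^ n)) (ker (f ^ n)) := by
  intro v hv
  rw [SetLike.mem_coe, mem_ker, ← mul_apply, ← (Commute.self_pow f n).eq, mul_apply,
    mem_ker.mp hv, map_zero]

theorem mapsTo_range_pow : Set.MapsTo f (range (f ^ n)) (range (f ^ n)) := by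
  rintro _ ⟨v, rfl⟩
  exact ⟨f v, by rw [← mul_apply, ← (Commute.self_pow f n).eq, mul_apply]⟩

variable {f n}

theorem isCompl_ker_pow_range_pow_of_stabilizes
    (hker : ∀ m, n ≤ m → ker (f ^ m) = ker (f ^ n))
    (hrange : ∀ m, n ≤ m → range (f ^ m) = range (f ^ n)) :
    IsCompl (ker (f ^ n)) (range (f ^ n)) := by
  constructor
  · rw [Submodule.disjoint_def]
    rintro _ hx ⟨y, rfl⟩
    have hy : y ∈ ker (f ^ (n + n)) := by rwa [mem_ker, pow_add, mul_apply]
    rwa [hker _ le_add_self] at hy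
  · rw [codisjoint_iff, Submodule.eq_top_iff']
    intro x
    obtain ⟨y, hy⟩ : (f ^ n) x ∈ range (f ^ (n + n)) :=
      (hrange _ le_add_self).symm ▸ mem_range_self _ x
    rw [pow_add, mul_apply] at hy
    refine Submodule.mem_sup.mpr
      ⟨x - (f ^ n) y, ?_, (f ^ n) y, mem_range_self _ y, sub_add_cancel _ _⟩
    rw [mem_ker, map_sub, hy, sub_self]

theorem bijOn_range_pow_of_stabilizes (hn : n ≠ 0)
    (hker : ∀ m, n ≤ m → ker (f ^ m) = ker (f ^ n))
    (hrange : ∀ m, n ≤ m → range (f ^ m) = range (f ^ n)) :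
    Set.BijOn f (range (f ^ n)) (range (f ^ n)) := by
  refine ⟨mapsTo_range_pow f n, fun u hu v hv huv => ?_, ?_⟩
  · have hker_f : u - v ∈ ker (f ^ n) :=
      f.iterateKer.monotone (Nat.one_le_iff_ne_zero.mpr hn) (by simp [huv])
    exact sub_eq_zero.mp <| (Submodule.disjoint_def.mp
      (isCompl_ker_pow_range_pow_of_stabilizes hker hrange).disjoint) _ hker_f (sub_mem hu hv)
  · intro x hx
    obtain ⟨y, rfl⟩ : x ∈ range (f ^ (n + 1)) := (hrange _ n.le_succ).symm ▸ hx
    exact ⟨(f ^ n) y, mem_range_self _ y, by rw [pow_succ', mul_apply]⟩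

end Module.End

theorem Function.iterate_map_smul_pow {k V : Type*} [Monoid k] [SMul k V] {φ : V → V} {p : ℕ}
    (hφ : ∀ (a : k) (v : V), φ (a • v) = a ^ p • φ v) (n : ℕ) (a : k) (v : V) :
    φ^[n] (a • v) = a ^ p ^ n • φ^[n] v := by
  induction n generalizing a v with
  | zero => simp
  | succ n ih => rw [iterate_succ_apply, hφ, ih, iterate_succ_apply, ← pow_mul, pow_succ']

namespace AddMonoidHom

variable {k V : Type*} [Semiring k] [AddCommGroup V] [Module k V] {p : ℕ} {φ : V →+ V}

theorem smul_mem_ker_toIntLinearMap_pow (hφ : ∀ (a : k) (v : V), φ (a • v) = a ^ p • φ v)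
    (n : ℕ) (a : k) :
    ∀ v ∈ LinearMap.ker (φ.toIntLinearMap ^ n), a • v ∈ LinearMap.ker (φ.toIntLinearMap ^ n) := by
  intro v hv
  rw [LinearMap.mem_ker, Module.End.pow_apply] at hv ⊢
  rw [coe_toIntLinearMap, Function.iterate_map_smul_pow hφ, ← coe_toIntLinearMap, hv, smul_zero]

theorem smul_mem_range_toIntLinearMap_pow (hφ : ∀ (a : k) (v : V), φ (a • v) = a ^ p • φ v)
    (hp : Function.Surjective fun a : k => a ^ p) (n : ℕ) (a : k) :
    ∀ v ∈ LinearMap.range (φ.toIntLinearMap ^ n),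
      a • v ∈ LinearMap.range (φ.toIntLinearMap ^ n) := by
  rintro _ ⟨v, rfl⟩
  obtain ⟨b, rfl⟩ : ∃ b, b ^ p ^ n = a := by
    simpa only [pow_iterate] using hp.iterate n a
  refine ⟨b • v, ?_⟩
  rw [Module.End.pow_apply, Module.End.pow_apply, coe_toIntLinearMap,
    Function.iterate_map_smul_pow hφ]

end AddMonoidHom

open LinearMap Module.End

theorem semilinear_fitting_decomposition_general (k V : Type) [Field k] [IsAlgClosed k]
    (p : ℕ) [Fact (Nat.Prime p)] [AddCommGroup V] [Module k V]
    [FiniteDimensional k V] (φ : V →+ V)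
    (hsemi : ∀ (a : k) (v : V), φ (a • v) = a ^ p • φ v) :
    ∃ Vss Vnilp : Submodule k V, IsCompl Vss Vnilp ∧
      (∀ v ∈ Vss, φ v ∈ Vss) ∧ (∀ v ∈ Vnilp, φ v ∈ Vnilp) ∧
      Set.BijOn (⇑φ) (Vss : Set V) (Vss : Set V) ∧
      ∃ t : ℕ, ∀ v ∈ Vnilp, (⇑φ)^[t] v = 0 := by
  have hp : Function.Surjective fun a : k => a ^ p := fun a =>
    IsAlgClosed.exists_pow_nat_eq a (Fact.out : p.Prime).pos
  set f := φ.toIntLinearMap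
  have hK n := (ker (f ^ n)).exists_restrictScalars_eq_of_smul_mem
    (φ.smul_mem_ker_toIntLinearMap_pow hsemi n)
  have hW n := (range (f ^ n)).exists_restrictScalars_eq_of_smul_mem
    (φ.smul_mem_range_toIntLinearMap_pow hsemi hp n)
  obtain ⟨n, hn, hker, hrange⟩ := ((Filter.eventually_ne_atTop 0).and
    ((Submodule.monotone_stabilizes_of_restrictScalars f.iterateKer.monotone hK).and
      (Submodule.antitone_stabilizes_of_restrictScalars
        (fun _ _ h => f.iterateRange.monotone h) hW))).exists
  obtain ⟨Vnilp, hVnilp⟩ := hK n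
  obtain ⟨Vss, hVss⟩ := hW n
  have hnilp : (Vnilp : Set V) = ker (f ^ n) := congrArg SetLike.coe hVnilp
  have hss : (Vss : Set V) = range (f ^ n) := congrArg SetLike.coe hVss
  refine ⟨Vss, Vnilp, ?_, ?_, ?_, ?_, n, fun v hv => ?_⟩
  · rw [← Submodule.isCompl_restrictScalars_iff ℤ, hVss, hVnilp]
    exact (isCompl_ker_pow_range_pow_of_stabilizes hker hrange).symm
  · show Set.MapsTo φ Vss Vss
    rw [hss]
    exact mapsTo_range_pow f n
  · show Set.MapsTo φ Vnilp Vnilp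
    rw [hnilp]
    exact mapsTo_ker_pow f n
  · rw [hss]
    exact bijOn_range_pow_of_stabilizes hn hker hrange
  · rwa [← SetLike.mem_coe, hnilp, SetLike.mem_coe, mem_ker, Module.End.pow_apply] at hv

/-- Fitting decomposition for a `p`-semilinear endomorphism: let `V` be a finite-dimensional
vector space over an algebraically closed field `k` of characteristic `p > 0` and
`φ : V → V` additive with `φ (a • v) = a^p • φ v`.  Then `V = V_ss ⊕ V_nilp` with both
summands `φ`-stable, `φ` bijective on `V_ss` and nilpotent on `V_nilp`. -/
theorem semilinear_fitting_decomposition (k V : Type) [Field k] [IsAlgClosed k]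
    (p : ℕ) [Fact (Nat.Prime p)] [CharP k p] [AddCommGroup V] [Module k V]
    [FiniteDimensional k V] (φ : V →+ V)
    (hsemi : ∀ (a : k) (v : V), φ (a • v) = a ^ p • φ v) :
    ∃ Vss Vnilp : Submodule k V, IsCompl Vss Vnilp ∧
      (∀ v ∈ Vss, φ v ∈ Vss) ∧ (∀ v ∈ Vnilp, φ v ∈ Vnilp) ∧
      Set.BijOn (⇑φ) (Vss : Set V) (Vss : Set V) ∧
      ∃ t : ℕ, ∀ v ∈ Vnilp, (⇑φ)^[t] v = 0 :=
  semilinear_fitting_decomposition_general k V p φ hsemi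
end

section
/- Let E be a vector bundle on a projective variety X over an algebraically closed field. Then E is Nori semistable if and only if both E and its dual E^∨ are numerically effective. -/
/-!
Everything happens on one curve at a time, for `G = f^* E`. Duality turns subsheaves of `G` into
quotients of `G^∨` with opposite degree, so "subsheaves of `G` have degree `≤ 0`" and
"quotients of `G^∨` have degree `≥ 0`" are the same condition. A quotient `Q` of `G` has a
kernel `W` with `deg Q = deg G - deg W`, which is `≥ 0` when `deg G = 0` and `G` is semistable.
Conversely, `G` and `G^∨` are quotients of themselves, so both `deg G` and `-deg G` are `≥ 0`.
-/

section

/- Abstract setting: `Bundle` is the type of vector bundles on a projective variety `X`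
over an algebraically closed field, `I` indexes the pairs `(C, f)` of a smooth projective
curve `C` with a morphism `f : C → X`, and `pull i E` is the pullback `f^* E` on the curve
indexed by `i`.  `CSheaf` is the type of coherent sheaves on the curves, with degree `deg`,
rank `rk`, subsheaf relation `Sub`, quotient relation `Quot` and dual `dual`. -/
variable (Bundle I CSheaf : Type)
  (deg : CSheaf → ℤ) (rk : CSheaf → ℕ)
  (Sub Quot : CSheaf → CSheaf → Prop) (dual : CSheaf → CSheaf)
  (pull : I → Bundle → CSheaf) (Bdual : Bundle → Bundle)

def NoriSemistable (E : Bundle) : Prop :=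
  ∀ i : I, deg (pull i E) = 0 ∧
    ∀ W, Sub W (pull i E) → 0 < rk W → (deg W : ℚ) / (rk W : ℚ) ≤ 0

/-- The minimal slope of `f^* E` is nonnegative iff every quotient of `f^* E` of positive rank
has nonnegative slope. -/
def NumericallyEffective (E : Bundle) : Prop :=
  ∀ i : I, ∀ Q, Quot Q (pull i E) → 0 < rk Q → 0 ≤ (deg Q : ℚ) / (rk Q : ℚ)

theorem intCast_div_natCast_nonneg_iff {d : ℤ} {r : ℕ} (hr : 0 < r) :
    0 ≤ (d : ℚ) / r ↔ 0 ≤ d := by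
  rw [le_div_iff₀ (by exact_mod_cast hr), zero_mul, Int.cast_nonneg_iff]

theorem intCast_div_natCast_nonpos_iff {d : ℤ} {r : ℕ} (hr : 0 < r) :
    (d : ℚ) / r ≤ 0 ↔ d ≤ 0 := by
  rw [div_le_iff₀ (by exact_mod_cast hr), zero_mul, Int.cast_nonpos]

section Curves

variable {Bundle I CSheaf deg rk Sub Quot dual pull}

theorem noriSemistable_iff_deg (E : Bundle) :
    NoriSemistable Bundle I CSheaf deg rk Sub pull E ↔
      ∀ i, deg (pull i E) = 0 ∧ ∀ W, Sub W (pull i E) → 0 < rk W → deg W ≤ 0 := by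
  refine forall_congr' fun i => and_congr_right fun _ => ?_
  exact forall₃_congr fun W _ hW => intCast_div_natCast_nonpos_iff hW

theorem numericallyEffective_iff_deg (E : Bundle) :
    NumericallyEffective Bundle I CSheaf deg rk Quot pull E ↔
      ∀ i Q, Quot Q (pull i E) → 0 < rk Q → 0 ≤ deg Q :=
  forall_congr' fun _ => forall₃_congr fun _ _ hQ => intCast_div_natCast_nonneg_iff hQ

theorem deg_quot_nonneg_of_semistable
    (hker : ∀ G Q, Quot Q G → ∃ W, deg W + deg Q = deg G ∧ rk W + rk Q = rk G ∧
      (rk W = 0 → deg W = 0) ∧ (0 < rk W → Sub W G))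
    {G Q : CSheaf} (hG : deg G = 0) (hsub : ∀ W, Sub W G → 0 < rk W → deg W ≤ 0)
    (hQ : Quot Q G) : 0 ≤ deg Q := by
  obtain ⟨W, hdeg, -, htorsion, hW⟩ := hker G Q hQ
  have hWdeg : deg W ≤ 0 := by
    rcases (rk W).eq_zero_or_pos with h | h
    · exact (htorsion h).le
    · exact hsub W (hW h) h
  omega

theorem deg_dual_quot_nonneg_of_semistable
    (hdualquot : ∀ G Q, Quot Q (dual G) → ∃ W, Sub W G ∧ deg W = -deg Q ∧ rk W = rk Q)
    {G Q : CSheaf} (hsub : ∀ W, Sub W G → 0 < rk W → deg W ≤ 0)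
    (hQ : Quot Q (dual G)) (hrkQ : 0 < rk Q) : 0 ≤ deg Q := by
  obtain ⟨W, hW, hdeg, hrk⟩ := hdualquot G Q hQ
  have := hsub W hW (hrk ▸ hrkQ)
  omega

theorem deg_sub_nonpos_of_dual_quot_deg_nonneg
    (hdualsub : ∀ G W, Sub W G → ∃ Q, Quot Q (dual G) ∧ deg Q = -deg W ∧ rk Q = rk W)
    {G W : CSheaf} (hdualnef : ∀ Q, Quot Q (dual G) → 0 < rk Q → 0 ≤ deg Q)
    (hW : Sub W G) (hrkW : 0 < rk W) : deg W ≤ 0 := by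
  obtain ⟨Q, hQ, hdeg, hrk⟩ := hdualsub G W hW
  have := hdualnef Q hQ (hrk ▸ hrkW)
  omega

theorem deg_eq_zero_of_quot_deg_nonneg
    (hQself : ∀ G : CSheaf, Quot G G)
    (hdualdeg : ∀ G, deg (dual G) = -deg G ∧ rk (dual G) = rk G)
    {G : CSheaf} (hrk : 0 < rk G)
    (hnef : ∀ Q, Quot Q G → 0 < rk Q → 0 ≤ deg Q)
    (hdualnef : ∀ Q, Quot Q (dual G) → 0 < rk Q → 0 ≤ deg Q) : deg G = 0 := by
  have hG := hnef G (hQself G) hrk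
  have hdualG := hdualnef (dual G) (hQself _) ((hdualdeg G).2 ▸ hrk)
  have := (hdualdeg G).1
  omega

theorem semistable_deg_zero_iff_quot_deg_nonneg_and_dual
    (hQself : ∀ G : CSheaf, Quot G G)
    (hker : ∀ G Q, Quot Q G → ∃ W, deg W + deg Q = deg G ∧ rk W + rk Q = rk G ∧
      (rk W = 0 → deg W = 0) ∧ (0 < rk W → Sub W G))
    (hdualdeg : ∀ G, deg (dual G) = -deg G ∧ rk (dual G) = rk G)
    (hdualsub : ∀ G W, Sub W G → ∃ Q, Quot Q (dual G) ∧ deg Q = -deg W ∧ rk Q = rk W)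
    (hdualquot : ∀ G Q, Quot Q (dual G) → ∃ W, Sub W G ∧ deg W = -deg Q ∧ rk W = rk Q)
    {G : CSheaf} (hrk : 0 < rk G) :
    (deg G = 0 ∧ ∀ W, Sub W G → 0 < rk W → deg W ≤ 0) ↔
      (∀ Q, Quot Q G → 0 < rk Q → 0 ≤ deg Q) ∧
        ∀ Q, Quot Q (dual G) → 0 < rk Q → 0 ≤ deg Q := by
  constructor
  · rintro ⟨hG, hsub⟩
    exact ⟨fun Q hQ _ => deg_quot_nonneg_of_semistable hker hG hsub hQ,
      fun Q hQ hrkQ => deg_dual_quot_nonneg_of_semistable hdualquot hsub hQ hrkQ⟩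
  · rintro ⟨hnef, hdualnef⟩
    exact ⟨deg_eq_zero_of_quot_deg_nonneg hQself hdualdeg hrk hnef hdualnef,
      fun W hW hrkW => deg_sub_nonpos_of_dual_quot_deg_nonneg hdualsub hdualnef hW hrkW⟩

end Curves

/-- The hypotheses encode standard facts on curves: every sheaf is a quotient of itself; a
quotient has a kernel with additive degree and rank (rank-0 kernels being torsion of degree 0);
duality exchanges degree signs and preserves rank; subsheaves of `G` correspond to quotients of
`dual G` and conversely; and pullback commutes with duals, with pullbacks of bundles having
positive rank. -/
theorem noriSemistable_iff_nef_and_dual_nef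
    (hQself : ∀ G : CSheaf, Quot G G)
    (hker : ∀ G Q, Quot Q G → ∃ W, deg W + deg Q = deg G ∧ rk W + rk Q = rk G ∧
      (rk W = 0 → deg W = 0) ∧ (0 < rk W → Sub W G))
    (hdualdeg : ∀ G, deg (dual G) = -deg G ∧ rk (dual G) = rk G)
    (hdualsub : ∀ G W, Sub W G → ∃ Q, Quot Q (dual G) ∧ deg Q = -deg W ∧ rk Q = rk W)
    (hdualquot : ∀ G Q, Quot Q (dual G) → ∃ W, Sub W G ∧ deg W = -deg Q ∧ rk W = rk Q)
    (hpulldual : ∀ (i : I) (E : Bundle), pull i (Bdual E) = dual (pull i E))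
    (hrkpull : ∀ (i : I) (E : Bundle), 0 < rk (pull i E))
    (E : Bundle) :
    NoriSemistable Bundle I CSheaf deg rk Sub pull E ↔
      NumericallyEffective Bundle I CSheaf deg rk Quot pull E ∧
      NumericallyEffective Bundle I CSheaf deg rk Quot pull (Bdual E) := by
  rw [noriSemistable_iff_deg, numericallyEffective_iff_deg, numericallyEffective_iff_deg,
    ← forall_and]
  simp only [hpulldual]
  exact forall_congr' fun i => semistable_deg_zero_iff_quot_deg_nonneg_and_dual
    hQself hker hdualdeg hdualsub hdualquot (hrkpull i E)

end
end
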